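/- Lazy equivalence is transitive with extended reduction for terms: if L₁ and L₂ are lazily equivalent at level 0 with respect to T₁, and T₁ reduces to T₂ in one extended parallel step in L₂, then T₁ reduces to T₂ in one extended parallel step in L₁. -/

import Mathlib

inductive Bk | abbr | abst
deriving DecidableEq

inductive Fk | appl | cast
deriving DecidableEq

inductive Tm
| sort : Nat → Tm
| lref : Nat → Tm
| bind : Bk → Tm → Tm → Tm
| flat : Fk → Tm → Tm → Tm
deriving DecidableEq

inductive Lift : Nat → Nat → Tm → Tm → Prop
| sort (l m k) : Lift l m (.sort k) (.sort k)
| lt {l m i} : i < l → Lift l m (.lref i) (.lref i)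
| ge {l m i} : l ≤ i → Lift l m (.lref i) (.lref (i + m))
| bind {l m b W₁ W₂ T₁ T₂} : Lift l m W₁ W₂ → Lift (l + 1) m T₁ T₂ →
    Lift l m (.bind b W₁ T₁) (.bind b W₂ T₂)
| flat {l m f V₁ V₂ T₁ T₂} : Lift l m V₁ V₂ → Lift l m T₁ T₂ →
    Lift l m (.flat f V₁ T₁) (.flat f V₂ T₂)

inductive Env
| null : Env
| pair : Env → Bk → Tm → Env
deriving DecidableEq

inductive Drop : Nat → Nat → Env → Env → Prop
| atom (l) : Drop l 0 .null .null
| pair {L₁ L₂ b W} : Drop 0 0 L₁ L₂ → Drop 0 0 (.pair L₁ b W) (.pair L₂ b W)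
| drop {m L₁ L₂ b W} : Drop 0 m L₁ L₂ → Drop 0 (m + 1) (.pair L₁ b W) L₂
| skip {l m L₁ L₂ b W₁ W₂} : Drop l m L₁ L₂ → Lift l m W₂ W₁ →
    Drop (l + 1) m (.pair L₁ b W₁) (.pair L₂ b W₂)

inductive Cpx (h g : Nat → Nat) : Env → Tm → Tm → Prop
| sort {L k} : Cpx h g L (.sort k) (.sort k)
| lref {L i} : Cpx h g L (.lref i) (.lref i)
| st {L k d} : g k = d + 1 → Cpx h g L (.sort k) (.sort (h k))
| bind {L b W₁ W₂ T₁ T₂} : Cpx h g L W₁ W₂ → Cpx h g (.pair L b W₁) T₁ T₂ →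
    Cpx h g L (.bind b W₁ T₁) (.bind b W₂ T₂)
| flat {L f V₁ V₂ T₁ T₂} : Cpx h g L V₁ V₂ → Cpx h g L T₁ T₂ →
    Cpx h g L (.flat f V₁ T₁) (.flat f V₂ T₂)
| delta {L K b W₁ W₂ V₂ i} : Drop 0 i L (.pair K b W₁) → Cpx h g K W₁ W₂ →
    Lift 0 (i + 1) W₂ V₂ → Cpx h g L (.lref i) V₂
| beta {L V₁ V₂ W₁ W₂ T₁ T₂} : Cpx h g L V₁ V₂ → Cpx h g L W₁ W₂ →
    Cpx h g (.pair L .abst W₁) T₁ T₂ →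
    Cpx h g L (.flat .appl V₁ (.bind .abst W₁ T₁))
      (.bind .abbr (.flat .cast W₂ V₂) T₂)
| zeta {L V U₁ U₂ T₂} : Cpx h g (.pair L .abbr V) U₁ U₂ → Lift 0 1 T₂ U₂ →
    Cpx h g L (.bind .abbr V U₁) T₂
| eps {L U T₁ T₂} : Cpx h g L T₁ T₂ → Cpx h g L (.flat .cast U T₁) T₂
| ee {L U₁ U₂ T} : Cpx h g L U₁ U₂ → Cpx h g L (.flat .cast U₁ T) U₂
| theta {L V₁ V₂ W₂ U₁ U₂ T₁ T₂} : Cpx h g L V₁ V₂ → Lift 0 1 V₂ W₂ →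
    Cpx h g L U₁ U₂ → Cpx h g (.pair L .abbr U₁) T₁ T₂ →
    Cpx h g L (.flat .appl V₁ (.bind .abbr U₁ T₁))
      (.bind .abbr U₂ (.flat .appl W₂ T₂))

inductive Lpx (h g : Nat → Nat) : Env → Env → Prop
| atom : Lpx h g .null .null
| pair {L₁ L₂ b W₁ W₂} : Lpx h g L₁ L₂ → Cpx h g L₁ W₁ W₂ →
    Lpx h g (.pair L₁ b W₁) (.pair L₂ b W₂)

def elen : Env → Nat
| .null => 0
| .pair L _ _ => elen L + 1

inductive Lleq : Nat → Tm → Env → Env → Prop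
| sort {l k L₁ L₂} : elen L₁ = elen L₂ → Lleq l (.sort k) L₁ L₂
| skip {l i L₁ L₂} : elen L₁ = elen L₂ → i < l → Lleq l (.lref i) L₁ L₂
| free {l i L₁ L₂} : elen L₁ = elen L₂ → elen L₁ ≤ i → elen L₂ ≤ i →
    Lleq l (.lref i) L₁ L₂
| lref {l i L₁ L₂ K₁ K₂ b W} : l ≤ i →
    Drop 0 i L₁ (.pair K₁ b W) → Drop 0 i L₂ (.pair K₂ b W) →
    Lleq 0 W K₁ K₂ → Lleq l (.lref i) L₁ L₂
| bind {l b W T L₁ L₂} : Lleq l W L₁ L₂ →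
    Lleq (l + 1) T (.pair L₁ b W) (.pair L₂ b W) →
    Lleq l (.bind b W T) L₁ L₂
| flat {l f V T L₁ L₂} : Lleq l V L₁ L₂ → Lleq l T L₁ L₂ →
    Lleq l (.flat f V T) L₁ L₂

/-!
Induction on the reduction step. The environment is consulted only when a variable `i` is
δ-expanded, and lazy equivalence at level 0 makes the `i`-th entries of `L₁` and `L₂` coincide and
be equivalent again, so the step can be replayed in `L₁`. Under a binder the equivalence holds at
level 1 in environments extended by the same entry, which is equivalent by the binder's own
hypothesis, so it drops back to level 0 and the induction hypothesis applies.
-/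

theorem Drop.refl : ∀ L : Env, Drop 0 0 L L
  | .null => .atom 0
  | .pair L _ _ => .pair (Drop.refl L)

theorem Drop.unique : ∀ {i L X Y}, Drop 0 i L X → Drop 0 i L Y → X = Y
  | _, _, _, _, .atom _, .atom _ => rfl
  | _, _, _, _, .pair h₁, .pair h₂ => by rw [Drop.unique h₁ h₂]
  | _, _, _, _, .drop h₁, .drop h₂ => Drop.unique h₁ h₂

theorem Drop.lt_elen : ∀ {i L K b W}, Drop 0 i L (.pair K b W) → i < elen L
  | _, _, _, _, _, .pair _ => Nat.succ_pos _
  | _, _, _, _, _, .drop h => Nat.succ_lt_succ h.lt_elen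

theorem Lleq.of_succ {l T M₁ M₂ K₁ K₂ b W} (hq : Lleq (l + 1) T M₁ M₂)
    (d₁ : Drop 0 l M₁ (.pair K₁ b W)) (d₂ : Drop 0 l M₂ (.pair K₂ b W))
    (hW : Lleq 0 W K₁ K₂) : Lleq l T M₁ M₂ := by
  generalize hl : l + 1 = l' at hq
  induction hq generalizing l with
  | sort he => exact .sort he
  | @skip _ i _ _ he hi =>
    subst hl
    rcases Nat.lt_succ_iff_lt_or_eq.mp hi with hi | rfl
    · exact .skip he hi
    · exact .lref le_rfl d₁ d₂ hW
  | free he h₁ h₂ => exact .free he h₁ h₂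
  | lref hi d₁' d₂' hW' => exact .lref (by omega) d₁' d₂' hW'
  | bind _ _ ihW ihT =>
    subst hl
    exact .bind (ihW d₁ d₂ rfl) (ihT d₁.drop d₂.drop rfl)
  | flat _ _ ihV ihT => exact .flat (ihV d₁ d₂ hl) (ihT d₁ d₂ hl)

theorem Lleq.bind_inv {b W T L₁ L₂} (hq : Lleq 0 (.bind b W T) L₁ L₂) :
    Lleq 0 W L₁ L₂ ∧ Lleq 0 T (.pair L₁ b W) (.pair L₂ b W) := by
  cases hq with
  | bind hW hT => exact ⟨hW, hT.of_succ (.refl _) (.refl _) hW⟩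

theorem Lleq.flat_inv {f V T L₁ L₂} (hq : Lleq 0 (.flat f V T) L₁ L₂) :
    Lleq 0 V L₁ L₂ ∧ Lleq 0 T L₁ L₂ := by
  cases hq with
  | flat hV hT => exact ⟨hV, hT⟩

theorem Lleq.lref_inv {i L₁ L₂ K₂ b W} (hq : Lleq 0 (.lref i) L₁ L₂)
    (d₂ : Drop 0 i L₂ (.pair K₂ b W)) :
    ∃ K₁, Drop 0 i L₁ (.pair K₁ b W) ∧ Lleq 0 W K₁ K₂ := by
  cases hq with
  | skip _ hi => omega
  | free _ _ h₂ => exact absurd d₂.lt_elen (not_lt.mpr h₂)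
  | lref _ d₁ d₂' hW =>
    cases d₂'.unique d₂
    exact ⟨_, d₁, hW⟩

theorem lleq_cpx_trans {h g : Nat → Nat} {L₁ L₂ : Env} {T₁ T₂ : Tm}
    (hq : Lleq 0 T₁ L₁ L₂) (hc : Cpx h g L₂ T₁ T₂) : Cpx h g L₁ T₁ T₂ := by
  induction hc generalizing L₁ with
  | sort => exact .sort
  | lref => exact .lref
  | st e => exact .st e
  | bind _ _ ihW ihT =>
    obtain ⟨hW, hT⟩ := hq.bind_inv
    exact .bind (ihW hW) (ihT hT)
  | flat _ _ ihV ihT =>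
    obtain ⟨hV, hT⟩ := hq.flat_inv
    exact .flat (ihV hV) (ihT hT)
  | delta d₂ _ hl ihW =>
    obtain ⟨_, d₁, hW⟩ := hq.lref_inv d₂
    exact .delta d₁ (ihW hW) hl
  | beta _ _ _ ihV ihW ihT =>
    obtain ⟨hV, hB⟩ := hq.flat_inv
    obtain ⟨hW, hT⟩ := hB.bind_inv
    exact .beta (ihV hV) (ihW hW) (ihT hT)
  | zeta _ hl ihU => exact .zeta (ihU hq.bind_inv.2) hl
  | eps _ ih => exact .eps (ih hq.flat_inv.2)
  | ee _ ih => exact .ee (ih hq.flat_inv.1)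
  | theta _ hl _ _ ihV ihU ihT =>
    obtain ⟨hV, hB⟩ := hq.flat_inv
    obtain ⟨hU, hT⟩ := hB.bind_inv
    exact .theta (ihV hV) hl (ihU hU) (ihT hT)
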